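/- arXiv:2408.04790 — 3 statements merged into one kernel-verified Lean document; each statement's English description precedes it below -/
import Mathlib

section
/- Set μ = 1, suppose δ_R ≠ τ_R², and let x̃ = (τ_R + 1)/(δ_R − τ_R²). Then the fourth iterate f_R⁴(x̃, 0) has first coordinate equal to 0 if and only if τ_R³ + τ_R² δ_R + τ_R δ_R² + τ_R² − τ_R δ_R − δ_R = 0 (the shrinking point curve θ₁). -/
/-- The right piece of the border-collision normal form, with `μ = 1`. -/
def fR (τR δR : ℝ) (p : ℝ × ℝ) : ℝ × ℝ := (τR * p.1 + p.2 + 1, -δR * p.1)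

/-- with `μ = 1`, `δR ≠ τR²`, and `x̃ = (τR + 1)/(δR - τR²)`, the fourth
iterate `fR⁴(x̃, 0)` has first coordinate `0` if and only if
`τR³ + τR² δR + τR δR² + τR² - τR δR - δR = 0` (the shrinking point curve `θ₁`). -/
theorem stmt_15 (τR δR : ℝ) (h : δR ≠ τR ^ 2) :
    (fR τR δR (fR τR δR (fR τR δR (fR τR δR ((τR + 1) / (δR - τR ^ 2), 0))))).1 = 0 ↔
      τR ^ 3 + τR ^ 2 * δR + τR * δR ^ 2 + τR ^ 2 - τR * δR - δR = 0 := by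
  have hD : δR - τR ^ 2 ≠ 0 := sub_ne_zero.mpr h
  simp only [fR]
  rw [show (τR * (τR * (τR * (τR * ((τR + 1) / (δR - τR ^ 2)) + 0 + 1) +
      -δR * ((τR + 1) / (δR - τR ^ 2)) + 1) +
      -δR * (τR * ((τR + 1) / (δR - τR ^ 2)) + 0 + 1) + 1) +
      -δR * (τR * (τR * ((τR + 1) / (δR - τR ^ 2)) + 0 + 1) +
      -δR * ((τR + 1) / (δR - τR ^ 2)) + 1) + 1)
      = -(τR ^ 3 + τR ^ 2 * δR + τR * δR ^ 2 + τR ^ 2 - τR * δR - δR) / (δR - τR ^ 2) by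
    field_simp; ring]
  rw [div_eq_zero_iff, neg_eq_zero]
  simp [hD]
end

section
/- Set μ = 1, suppose δ_R ≠ τ_R², and let x̃ = (τ_R + 1)/(δ_R − τ_R²). Then the third iterate f_R³(x̃, 0) has first coordinate equal to 0 if and only if τ_R² + τ_R δ_R + δ_R² − δ_R = 0 (the shrinking point curve θ₂). -/
/-- with `μ = 1`, `δR ≠ τR²`, and `x̃ = (τR + 1)/(δR - τR²)`, the third
iterate `fR³(x̃, 0)` has first coordinate `0` if and only if
`τR² + τR δR + δR² - δR = 0` (the shrinking point curve `θ₂`). -/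
theorem stmt_16 (τR δR : ℝ) (h : δR ≠ τR ^ 2) :
    (fR τR δR (fR τR δR (fR τR δR ((τR + 1) / (δR - τR ^ 2), 0)))).1 = 0 ↔
      τR ^ 2 + τR * δR + δR ^ 2 - δR = 0 := by
  have hD : δR - τR ^ 2 ≠ 0 := sub_ne_zero.mpr h
  simp only [fR]
  field_simp
  constructor <;> intro h1 <;> nlinarith [sq_nonneg (δR - τR^2), sq_nonneg τR, h1, sq_nonneg (τR+δR)]
end

section
/- Set μ = 1, suppose τ_R ≠ 1 + δ_R, and let λ₁, λ₂ be the two (complex) roots of λ² − τ_R λ + δ_R = 0 with λ₁ ≠ λ₂. Then for every natural number n ≥ 1, the first component of f_Rⁿ(0,0) is zero if and only if λ₁ − λ₂ − (λ₁^{n+1} − λ₂^{n+1}) + λ₁λ₂(λ₁ⁿ − λ₂ⁿ) = 0 (the shrinking point curve κ_n). In particular, for n = 2 the first component of f_R²(0,0) equals τ_R + 1, so κ₂ is the line τ_R = −1. -/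
/-- with `μ = 1`, `τR ≠ 1 + δR`, and `λ₁ ≠ λ₂` the two complex roots of
`λ² - τR λ + δR = 0`, for every `n ≥ 1` the first component of `fRⁿ(0,0)` is zero iff
`λ₁ - λ₂ - (λ₁^(n+1) - λ₂^(n+1)) + λ₁λ₂(λ₁ⁿ - λ₂ⁿ) = 0` (the curve `κ_n`); in
particular the first component of `fR²(0,0)` equals `τR + 1`, so `κ₂` is the line
`τR = -1`. -/
theorem stmt_18 (τR δR : ℝ) (h : τR ≠ 1 + δR) (l1 l2 : ℂ)
    (h1 : l1 ^ 2 - τR * l1 + δR = 0) (h2 : l2 ^ 2 - τR * l2 + δR = 0)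
    (hne : l1 ≠ l2) :
    (∀ n : ℕ, 1 ≤ n →
      (((fR τR δR)^[n] (0, 0)).1 = 0 ↔
        l1 - l2 - (l1 ^ (n + 1) - l2 ^ (n + 1)) + l1 * l2 * (l1 ^ n - l2 ^ n) = 0)) ∧
    ((fR τR δR)^[2] (0, 0)).1 = τR + 1 := by
  have hl12 : l1 - l2 ≠ 0 := sub_ne_zero.mpr hne
  have hsub : l1 + l2 = (τR : ℂ) := by
    have h3 : (l1 - l2) * (l1 + l2 - τR) = 0 := by linear_combination h1 - h2
    rcases mul_eq_zero.mp h3 with h4 | h4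
    · exact absurd h4 hl12
    · exact sub_eq_zero.mp h4
  have hprod : l1 * l2 = (δR : ℂ) := by linear_combination l1 * hsub - h1
  have hτδ : (1 : ℂ) - τR + δR ≠ 0 := by
    intro hc
    apply h
    have hc' : ((τR - (1 + δR) : ℝ) : ℂ) = 0 := by push_cast; linear_combination -hc
    have : (τR - (1 + δR) : ℝ) = 0 := by exact_mod_cast hc'
    linarith
  have hDne : (l1 - l2) * ((1 - l1) * (1 - l2)) ≠ 0 := by
    refine mul_ne_zero hl12 ?_
    have hfac : (1 - l1) * (1 - l2) = 1 - τR + δR := by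
      linear_combination hprod - hsub
    rw [hfac]; exact hτδ
  have key : ∀ n : ℕ,
      (((fR τR δR)^[n] (0, 0)).1 : ℂ) * ((l1 - l2) * ((1 - l1) * (1 - l2))) =
        l1 - l2 - (l1 ^ (n + 1) - l2 ^ (n + 1)) + l1 * l2 * (l1 ^ n - l2 ^ n) ∧
      (((fR τR δR)^[n + 1] (0, 0)).1 : ℂ) * ((l1 - l2) * ((1 - l1) * (1 - l2))) =
        l1 - l2 - (l1 ^ (n + 2) - l2 ^ (n + 2)) + l1 * l2 * (l1 ^ (n + 1) - l2 ^ (n + 1)) ∧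
      (((fR τR δR)^[n + 1] (0, 0)).2 : ℝ) = -δR * ((fR τR δR)^[n] (0, 0)).1 := by
    intro n
    induction n with
    | zero =>
      have e1 : (fR τR δR)^[0 + 1] (0, 0) = (1, 0) := by
        norm_num [fR]
      refine ⟨by simp, ?_, ?_⟩
      · rw [e1]
        push_cast
        ring
      · rw [e1]
        simp
    | succ n ih =>
      obtain ⟨hx, hy, hz⟩ := ih
      have hstep : (fR τR δR)^[n + 1 + 1] (0, 0) =
          fR τR δR ((fR τR δR)^[n + 1] (0, 0)) :=
        Function.iterate_succ_apply' _ _ _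
      refine ⟨hy, ?_, ?_⟩
      · rw [hstep]
        show ((τR * ((fR τR δR)^[n + 1] (0, 0)).1 + ((fR τR δR)^[n + 1] (0, 0)).2 + 1 : ℝ) : ℂ)
            * _ = _
        rw [hz]
        push_cast
        calc ((τR : ℂ) * (((fR τR δR)^[n + 1] (0, 0)).1 : ℂ) +
                (-(δR : ℂ) * (((fR τR δR)^[n] (0, 0)).1 : ℂ)) + 1) *
              ((l1 - l2) * ((1 - l1) * (1 - l2)))
            = (τR : ℂ) * ((((fR τR δR)^[n + 1] (0, 0)).1 : ℂ) *
                ((l1 - l2) * ((1 - l1) * (1 - l2))))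
              - (δR : ℂ) * ((((fR τR δR)^[n] (0, 0)).1 : ℂ) *
                ((l1 - l2) * ((1 - l1) * (1 - l2))))
              + (l1 - l2) * ((1 - l1) * (1 - l2)) := by ring
          _ = (τR : ℂ) * (l1 - l2 - (l1 ^ (n + 2) - l2 ^ (n + 2)) +
                l1 * l2 * (l1 ^ (n + 1) - l2 ^ (n + 1)))
              - (δR : ℂ) * (l1 - l2 - (l1 ^ (n + 1) - l2 ^ (n + 1)) +
                l1 * l2 * (l1 ^ n - l2 ^ n))
              + (l1 - l2) * ((1 - l1) * (1 - l2)) := by rw [hx, hy]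
          _ = l1 - l2 - (l1 ^ (n + 1 + 2) - l2 ^ (n + 1 + 2)) +
                l1 * l2 * (l1 ^ (n + 1 + 1) - l2 ^ (n + 1 + 1)) := by
              rw [← hsub, ← hprod]; ring
      · rw [hstep]
        rfl
  constructor
  · intro n _
    obtain ⟨hx, -, -⟩ := key n
    constructor
    · intro h0
      rw [h0] at hx
      simpa using hx.symm
    · intro h0
      rw [h0] at hx
      rcases mul_eq_zero.mp hx with h4 | h4
      · exact_mod_cast h4
      · exact absurd h4 hDne
  · show (fR τR δR (fR τR δR (0, 0))).1 = τR + 1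
    simp [fR]
end
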